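/- (Transformation ₂Φ₁ to ₂Φ₂) For complex q with |q|<1 and complex a, b, c, z with |z| < 1 and c, denominators nonvanishing, ∑_{n=0}^∞ (a;q)_n (b;q)_n z^n / ((c;q)_n (q;q)_n) = ((bz;q)_∞ / (z;q)_∞) · ∑_{k=0}^∞ (-1)^k q^{k(k-1)/2} (b;q)_k (c/a;q)_k (az)^k / ((bz;q)_k (c;q)_k (q;q)_k). -/

import Mathlib

open Finset Filter


noncomputable def qPoch (q a : ℂ) (n : ℕ) : ℂ :=
  ∏ j ∈ Finset.range n, (1 - a * q ^ j)

noncomputable def qPochInf (q a : ℂ) : ℂ :=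
  ∏' j : ℕ, (1 - a * q ^ j)

noncomputable def cauchyP (q x y : ℂ) (n : ℕ) : ℂ :=
  ∏ j ∈ Finset.range n, (x - q ^ j * y)

lemma qPoch_zero (q a : ℂ) : qPoch q a 0 = 1 := by simp [qPoch]

lemma qPoch_succ (q a : ℂ) (n : ℕ) : qPoch q a (n+1) = qPoch q a n * (1 - a * q ^ n) := by
  simp [qPoch, Finset.prod_range_succ]

lemma qPoch_succ' (q a : ℂ) (n : ℕ) : qPoch q a (n+1) = (1 - a) * qPoch q (a*q) n := by
  rw [qPoch, Finset.prod_range_succ']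
  rw [qPoch]
  simp only [pow_zero, mul_one]
  rw [mul_comm]
  congr 1
  apply Finset.prod_congr rfl
  intro j _
  ring

lemma qPoch_add (q a : ℂ) (k n : ℕ) :
    qPoch q a (k + n) = qPoch q a k * qPoch q (a * q ^ k) n := by
  rw [qPoch, Finset.prod_range_add]
  congr 1
  apply Finset.prod_congr rfl
  intro j _
  rw [mul_assoc, ← pow_add]

lemma one_sub_ne_zero_of_norm_lt_one {x : ℂ} (hx : ‖x‖ < 1) : (1 : ℂ) - x ≠ 0 := by
  intro h
  have : x = 1 := by linear_combination -h
  rw [this] at hx; simp at hx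

lemma norm_q_pow_lt_one {q : ℂ} (hq : ‖q‖ < 1) (j : ℕ) (hj : 1 ≤ j) : ‖q ^ j‖ < 1 := by
  rw [norm_pow]
  calc ‖q‖ ^ j ≤ ‖q‖ ^ 1 := pow_le_pow_of_le_one (norm_nonneg q) hq.le hj
  _ < 1 := by simpa using hq

lemma qPoch_q_ne_zero {q : ℂ} (hq : ‖q‖ < 1) (n : ℕ) : qPoch q q n ≠ 0 := by
  rw [qPoch]
  apply Finset.prod_ne_zero_iff.2
  intro j _
  apply one_sub_ne_zero_of_norm_lt_one
  calc ‖q * q ^ j‖ = ‖q ^ (j+1)‖ := by rw [← pow_succ']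
  _ < 1 := norm_q_pow_lt_one hq _ (by omega)

lemma geom_sum_le_inv_one_sub {r : ℝ} (h0 : 0 ≤ r) (h1 : r < 1) (n : ℕ) :
    ∑ j ∈ Finset.range n, r ^ j ≤ (1 - r)⁻¹ :=
  calc ∑ j ∈ Finset.range n, r ^ j ≤ ∑' j : ℕ, r ^ j :=
        Summable.sum_le_tsum _ (fun j _ => pow_nonneg h0 j) (summable_geometric_of_lt_one h0 h1)
  _ = (1 - r)⁻¹ := tsum_geometric_of_lt_one h0 h1

lemma qPoch_norm_le {q : ℂ} (hq : ‖q‖ < 1) (x : ℂ) (n : ℕ) :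
    ‖qPoch q x n‖ ≤ Real.exp (‖x‖ * (1 - ‖q‖)⁻¹) := by
  calc ‖qPoch q x n‖ ≤ ∏ j ∈ Finset.range n, ‖(1 : ℂ) - x * q ^ j‖ := norm_prod_le _ _
  _ ≤ ∏ j ∈ Finset.range n, Real.exp (‖x‖ * ‖q‖ ^ j) := by
      apply Finset.prod_le_prod (fun j _ => norm_nonneg _)
      intro j _
      calc ‖(1:ℂ) - x * q ^ j‖ ≤ ‖(1:ℂ)‖ + ‖x * q ^ j‖ := norm_sub_le _ _
      _ = ‖x‖ * ‖q‖ ^ j + 1 := by simp [norm_mul, norm_pow]; ring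
      _ ≤ Real.exp (‖x‖ * ‖q‖ ^ j) := Real.add_one_le_exp _
  _ = Real.exp (∑ j ∈ Finset.range n, ‖x‖ * ‖q‖ ^ j) := by rw [Real.exp_sum]
  _ ≤ Real.exp (‖x‖ * (1 - ‖q‖)⁻¹) := by
      apply Real.exp_le_exp.2
      rw [← Finset.mul_sum]
      exact mul_le_mul_of_nonneg_left (geom_sum_le_inv_one_sub (norm_nonneg q) hq n)
        (norm_nonneg x)

lemma one_sub_sum_le_prod_one_sub (n : ℕ) (u : ℕ → ℝ) (h0 : ∀ j, 0 ≤ u j) (h1 : ∀ j, u j ≤ 1) :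
    1 - ∑ j ∈ Finset.range n, u j ≤ ∏ j ∈ Finset.range n, (1 - u j) := by
  induction n with
  | zero => simp
  | succ n ih =>
    rw [Finset.sum_range_succ, Finset.prod_range_succ]
    have hp : 0 ≤ ∏ j ∈ Finset.range n, (1 - u j) :=
      Finset.prod_nonneg (fun j _ => by linarith [h1 j])
    nlinarith [h0 n, h1 n, Finset.sum_nonneg (fun j (_ : j ∈ Finset.range n) => h0 j)]

lemma qPoch_norm_lower {q : ℂ} (hq : ‖q‖ < 1) {x : ℂ} (hx : ∀ n, qPoch q x n ≠ 0) :
    ∃ ε : ℝ, 0 < ε ∧ ∀ n, ε ≤ ‖qPoch q x n‖ := by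
  have hq0 : (0:ℝ) < 1 - ‖q‖ := by linarith
  obtain ⟨N, hN⟩ : ∃ N : ℕ, ‖x‖ * ‖q‖ ^ N * (1 - ‖q‖)⁻¹ ≤ 1/2 := by
    have ht : Filter.Tendsto (fun N : ℕ => ‖x‖ * ‖q‖ ^ N * (1 - ‖q‖)⁻¹) atTop (nhds 0) := by
      have h1 := tendsto_pow_atTop_nhds_zero_of_lt_one (norm_nonneg q) hq
      have h2 := (h1.const_mul (‖x‖)).mul_const ((1 - ‖q‖)⁻¹)
      simpa using h2
    exact (ht.eventually_le_const (show (0:ℝ) < 1/2 by norm_num)).exists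
  set w := x * q ^ N with hw
  have hwn : ∀ j : ℕ, ‖w‖ * ‖q‖ ^ j ≤ 1 := by
    intro j
    have h1 : ‖w‖ = ‖x‖ * ‖q‖ ^ N := by rw [hw, norm_mul, norm_pow]
    have h2 : ‖q‖ ^ j ≤ 1 := pow_le_one₀ (norm_nonneg q) hq.le
    have h3 : ‖x‖ * ‖q‖ ^ N ≤ (1/2) * (1 - ‖q‖) := by
      have hne : (1 - ‖q‖) ≠ 0 := ne_of_gt hq0
      calc ‖x‖ * ‖q‖ ^ N = ‖x‖ * ‖q‖ ^ N * (1 - ‖q‖)⁻¹ * (1 - ‖q‖) := by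
            rw [mul_assoc, inv_mul_cancel₀ hne, mul_one]
      _ ≤ (1/2) * (1 - ‖q‖) := by nlinarith
    nlinarith [norm_nonneg x, norm_nonneg q, pow_nonneg (norm_nonneg q) N,
      pow_nonneg (norm_nonneg q) j, mul_nonneg (norm_nonneg x) (pow_nonneg (norm_nonneg q) N)]
  have hwsum : ∀ k : ℕ, ∑ j ∈ Finset.range k, ‖w‖ * ‖q‖ ^ j ≤ 1/2 := by
    intro k
    rw [← Finset.mul_sum]
    have h1 : ‖w‖ = ‖x‖ * ‖q‖ ^ N := by rw [hw, norm_mul, norm_pow]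
    calc ‖w‖ * ∑ j ∈ Finset.range k, ‖q‖ ^ j ≤ ‖w‖ * (1 - ‖q‖)⁻¹ :=
          mul_le_mul_of_nonneg_left (geom_sum_le_inv_one_sub (norm_nonneg q) hq k)
            (norm_nonneg w)
    _ ≤ 1/2 := by rw [h1]; exact hN
  have h1 : ‖w‖ = ‖x‖ * ‖q‖ ^ N := by rw [hw, norm_mul, norm_pow]
  have hlow : ∀ k : ℕ, (1:ℝ)/2 ≤ ‖qPoch q w k‖ := by
    intro k
    calc (1:ℝ)/2 ≤ 1 - ∑ j ∈ Finset.range k, ‖w‖ * ‖q‖ ^ j := by linarith [hwsum k]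
    _ ≤ ∏ j ∈ Finset.range k, (1 - ‖w‖ * ‖q‖ ^ j) := by
        apply one_sub_sum_le_prod_one_sub
        · intro j; positivity
        · intro j; exact hwn j
    _ ≤ ‖qPoch q w k‖ := by
        rw [qPoch, norm_prod]
        apply Finset.prod_le_prod
        · intro j _; linarith [hwn j]
        · intro j _
          have e1 : 1 - ‖w‖ * ‖q‖ ^ j = 1 - ‖w * q ^ j‖ := by
            rw [hw]; simp [norm_mul, norm_pow, mul_assoc]
          have e2 : ‖(1:ℂ)‖ - ‖w * q ^ j‖ ≤ ‖(1:ℂ) - w * q ^ j‖ := norm_sub_norm_le _ _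
          simp only [norm_one] at e2
          linarith [e1.le, e1.ge]
  set m : ℝ := (Finset.range (N+1)).inf' (by simp) (fun n => ‖qPoch q x n‖) with hm
  have hmpos : 0 < m := by
    rw [hm]
    apply (Finset.lt_inf'_iff _).2
    intro n _
    exact norm_pos_iff.2 (hx n)
  refine ⟨m/2, by linarith, fun n => ?_⟩
  by_cases hn : n ≤ N
  · have : m ≤ ‖qPoch q x n‖ := Finset.inf'_le _ (by simp; omega)
    linarith
  · push_neg at hn
    have hsplit : qPoch q x n = qPoch q x N * qPoch q w (n - N) := by
      rw [hw, ← qPoch_add]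
      congr 1
      omega
    rw [hsplit, norm_mul]
    have h1 : m ≤ ‖qPoch q x N‖ := Finset.inf'_le _ (by simp)
    have h2 := hlow (n - N)
    nlinarith [norm_nonneg (qPoch q x N), norm_nonneg (qPoch q w (n-N))]

lemma summable_log_qp {q : ℂ} (hq : ‖q‖ < 1) {x : ℂ} :
    Summable (fun j : ℕ => Complex.log (1 - x * q ^ j)) := by
  apply Summable.of_norm_bounded_eventually_nat (g := fun j => 3/2 * (‖x‖ * ‖q‖ ^ j))
  · apply Summable.mul_left
    exact (summable_geometric_of_lt_one (norm_nonneg q) hq).mul_left _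
  · have ht : Filter.Tendsto (fun j : ℕ => ‖x‖ * ‖q‖ ^ j) atTop (nhds 0) := by
      have h1 := tendsto_pow_atTop_nhds_zero_of_lt_one (norm_nonneg q) hq
      simpa using h1.const_mul (‖x‖)
    filter_upwards [ht.eventually_le_const (show (0:ℝ) < 1/2 by norm_num)] with j hj
    have h2 : ‖-(x * q ^ j)‖ ≤ 1/2 := by
      rw [norm_neg, norm_mul, norm_pow]; exact hj
    have h3 := Complex.norm_log_one_add_half_le_self h2
    have h4 : (1:ℂ) + -(x * q ^ j) = 1 - x * q ^ j := by ring
    rw [h4] at h3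
    calc ‖Complex.log (1 - x * q ^ j)‖ ≤ 3/2 * ‖-(x * q ^ j)‖ := h3
    _ = 3/2 * (‖x‖ * ‖q‖ ^ j) := by rw [norm_neg, norm_mul, norm_pow]

lemma multipliable_qp {q : ℂ} (hq : ‖q‖ < 1) {x : ℂ} (hx : ∀ j : ℕ, (1:ℂ) - x * q ^ j ≠ 0) :
    Multipliable (fun j : ℕ => 1 - x * q ^ j) := by
  exact Complex.multipliable_of_summable_log (summable_log_qp hq)

lemma qPochInf_ne_zero {q : ℂ} (hq : ‖q‖ < 1) {x : ℂ} (hx : ∀ j : ℕ, (1:ℂ) - x * q ^ j ≠ 0) :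
    qPochInf q x ≠ 0 := by
  have h := Complex.cexp_tsum_eq_tprod (f := fun j : ℕ => 1 - x * q ^ j)
    hx (summable_log_qp hq)
  have h2 := h
  rw [qPochInf, ← h2]
  exact Complex.exp_ne_zero _

lemma tendsto_qPoch {q : ℂ} (hq : ‖q‖ < 1) {x : ℂ} (hx : ∀ j : ℕ, (1:ℂ) - x * q ^ j ≠ 0) :
    Filter.Tendsto (fun n => qPoch q x n) atTop (nhds (qPochInf q x)) :=
  (multipliable_qp hq hx).hasProd.tendsto_prod_nat

lemma qPochInf_split {q : ℂ} (hq : ‖q‖ < 1) {x : ℂ} (hx : ∀ j : ℕ, (1:ℂ) - x * q ^ j ≠ 0)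
    (k : ℕ) : qPochInf q x = qPoch q x k * qPochInf q (x * q ^ k) := by
  have hsh : ∀ j : ℕ, (1:ℂ) - x * q ^ (j + k) = 1 - (x * q ^ k) * q ^ j := by
    intro j; rw [mul_assoc, ← pow_add, add_comm k j]
  have hm : Multipliable (fun j : ℕ => (1:ℂ) - x * q ^ (j + k)) := by
    apply (multipliable_qp hq (x := x * q ^ k) ?_).congr (fun j => (hsh j).symm)
    intro j
    rw [← hsh j]
    exact hx (j + k)
  have h := Multipliable.prod_mul_tprod_nat_mul' (f := fun j : ℕ => (1:ℂ) - x * q ^ j) (k := k) hm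
  rw [qPochInf, ← h, qPoch]
  congr 1
  exact tprod_congr hsh

lemma summable_qbinom {q : ℂ} (hq : ‖q‖ < 1) (α : ℂ) {s : ℂ} (hs : ‖s‖ < 1) :
    Summable (fun n : ℕ => qPoch q α n * s ^ n / qPoch q q n) := by
  obtain ⟨ε, hε, hεle⟩ := qPoch_norm_lower hq (qPoch_q_ne_zero hq)
  apply Summable.of_norm_bounded (g := fun n => Real.exp (‖α‖ * (1 - ‖q‖)⁻¹) / ε * ‖s‖ ^ n)
  · exact ((summable_geometric_of_lt_one (norm_nonneg s) hs).mul_left _)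
  · intro n
    rw [norm_div, norm_mul, norm_pow]
    rw [div_le_iff₀ (lt_of_lt_of_le hε (hεle n))]
    have h1 : ‖qPoch q α n‖ ≤ Real.exp (‖α‖ * (1 - ‖q‖)⁻¹) := qPoch_norm_le hq α n
    have h2 : ε ≤ ‖qPoch q q n‖ := hεle n
    have h3 : (0:ℝ) < ε := hε
    have h4 : (0:ℝ) ≤ ‖s‖ ^ n := pow_nonneg (norm_nonneg s) n
    calc ‖qPoch q α n‖ * ‖s‖ ^ n ≤ Real.exp (‖α‖ * (1 - ‖q‖)⁻¹) * ‖s‖ ^ n := by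
          exact mul_le_mul_of_nonneg_right h1 h4
    _ = Real.exp (‖α‖ * (1 - ‖q‖)⁻¹) / ε * ‖s‖ ^ n * ε := by field_simp
    _ ≤ Real.exp (‖α‖ * (1 - ‖q‖)⁻¹) / ε * ‖s‖ ^ n * ‖qPoch q q n‖ := by
          apply mul_le_mul_of_nonneg_left h2
          positivity

lemma funceq {q : ℂ} (hq : ‖q‖ < 1) (α : ℂ) {s : ℂ} (hs : ‖s‖ < 1) :
    (1 - s) * ∑' n : ℕ, qPoch q α n * s ^ n / qPoch q q n =
    (1 - α * s) * ∑' n : ℕ, qPoch q α n * (q * s) ^ n / qPoch q q n := by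
  have hqs : ‖q * s‖ < 1 := by
    rw [norm_mul]
    calc ‖q‖ * ‖s‖ ≤ 1 * ‖s‖ := mul_le_mul_of_nonneg_right hq.le (norm_nonneg s)
    _ = ‖s‖ := one_mul _
    _ < 1 := hs
  have hsum1 := summable_qbinom hq α hs
  have hsum2 := summable_qbinom hq α hqs
  have expand : ∀ (u γ : ℂ), Summable (fun n : ℕ => qPoch q α n * u ^ n / qPoch q q n) →
      (1 - γ) * ∑' n : ℕ, qPoch q α n * u ^ n / qPoch q q n =
      1 + ∑' n : ℕ, (qPoch q α (n+1) * u ^ (n+1) / qPoch q q (n+1)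
        - γ * (qPoch q α n * u ^ n / qPoch q q n)) := by
    intro u γ hsum
    have h1 : (∑' n : ℕ, qPoch q α n * u ^ n / qPoch q q n) =
        1 + ∑' n : ℕ, qPoch q α (n+1) * u ^ (n+1) / qPoch q q (n+1) := by
      rw [Summable.tsum_eq_zero_add hsum]
      norm_num [qPoch_zero]
    have h2 : γ * ∑' n : ℕ, qPoch q α n * u ^ n / qPoch q q n =
        ∑' n : ℕ, γ * (qPoch q α n * u ^ n / qPoch q q n) := by
      rw [tsum_mul_left]
    rw [sub_mul, one_mul, h2, h1,
      Summable.tsum_sub ((summable_nat_add_iff 1).2 hsum) (hsum.mul_left _)]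
    ring
  rw [expand s s hsum1, expand (q*s) (α*s) hsum2]
  congr 1
  apply tsum_congr
  intro n
  have hqn := qPoch_q_ne_zero hq n
  have hqn1 : (1:ℂ) - q * q ^ n ≠ 0 := by
    apply one_sub_ne_zero_of_norm_lt_one
    calc ‖q * q ^ n‖ = ‖q ^ (n+1)‖ := by rw [← pow_succ']
    _ < 1 := norm_q_pow_lt_one hq _ (by omega)
  rw [qPoch_succ q α n, qPoch_succ q q n, mul_pow, mul_pow]
  rw [pow_succ q n]
  field_simp
  linear_combination (qPoch q α n * (s * s ^ n) * (1 - α * q ^ n)) * inv_mul_cancel₀ hqn1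

lemma qPoch_ne_zero_of_norm_lt {q x : ℂ} (hq : ‖q‖ < 1) (hx : ‖x‖ < 1) (n : ℕ) :
    qPoch q x n ≠ 0 := by
  rw [qPoch]
  apply Finset.prod_ne_zero_iff.2
  intro j _
  apply one_sub_ne_zero_of_norm_lt_one
  rw [norm_mul, norm_pow]
  calc ‖x‖ * ‖q‖ ^ j ≤ ‖x‖ * 1 := by
        apply mul_le_mul_of_nonneg_left (pow_le_one₀ (norm_nonneg q) hq.le) (norm_nonneg x)
  _ = ‖x‖ := mul_one _
  _ < 1 := hx

lemma qbinom_iter {q : ℂ} (hq : ‖q‖ < 1) (α : ℂ) {t : ℂ} (ht : ‖t‖ < 1) (m : ℕ) :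
    qPoch q t m * ∑' n : ℕ, qPoch q α n * t ^ n / qPoch q q n =
    qPoch q (α * t) m * ∑' n : ℕ, qPoch q α n * (q ^ m * t) ^ n / qPoch q q n := by
  induction m with
  | zero => simp [qPoch_zero]
  | succ m ih =>
    have hqmt : ‖q ^ m * t‖ < 1 := by
      rw [norm_mul, norm_pow]
      calc ‖q‖ ^ m * ‖t‖ ≤ 1 * ‖t‖ :=
            mul_le_mul_of_nonneg_right (pow_le_one₀ (norm_nonneg q) hq.le) (norm_nonneg t)
      _ = ‖t‖ := one_mul _
      _ < 1 := ht
    have hfe := funceq hq α hqmt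
    rw [qPoch_succ q t m, qPoch_succ q (α*t) m]
    calc qPoch q t m * (1 - t * q ^ m) * ∑' n : ℕ, qPoch q α n * t ^ n / qPoch q q n
        = (1 - t * q ^ m) * (qPoch q t m * ∑' n : ℕ, qPoch q α n * t ^ n / qPoch q q n) := by
          ring
    _ = (1 - t * q ^ m) *
          (qPoch q (α * t) m * ∑' n : ℕ, qPoch q α n * (q ^ m * t) ^ n / qPoch q q n) := by
          rw [ih]
    _ = qPoch q (α * t) m *
          ((1 - q ^ m * t) * ∑' n : ℕ, qPoch q α n * (q ^ m * t) ^ n / qPoch q q n) := by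
          ring
    _ = qPoch q (α * t) m *
          ((1 - α * (q ^ m * t)) *
            ∑' n : ℕ, qPoch q α n * (q * (q ^ m * t)) ^ n / qPoch q q n) := by
          rw [hfe]
    _ = qPoch q (α * t) m * (1 - α * t * q ^ m) *
          ∑' n : ℕ, qPoch q α n * (q ^ (m+1) * t) ^ n / qPoch q q n := by
          have h1 : q * (q ^ m * t) = q ^ (m+1) * t := by ring
          rw [h1]
          ring

lemma qbinom {q : ℂ} (hq : ‖q‖ < 1) (α : ℂ) {t : ℂ} (ht : ‖t‖ < 1)
    (hα : ∀ j : ℕ, (1:ℂ) - α * t * q ^ j ≠ 0) :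
    ∑' n : ℕ, qPoch q α n * t ^ n / qPoch q q n = qPochInf q (α * t) / qPochInf q t := by
  obtain ⟨ε, hε, hεle⟩ := qPoch_norm_lower hq (qPoch_q_ne_zero hq)
  set E : ℝ := Real.exp (‖α‖ * (1 - ‖q‖)⁻¹) with hE
  have hEpos : 0 < E := Real.exp_pos _
  set K : ℝ := E / ε / (1 - ‖t‖) with hK
  have hKpos : 0 < K := by
    apply div_pos (div_pos hEpos hε); linarith
  -- bound ‖F s - 1‖ ≤ K ‖s‖ for ‖s‖ ≤ ‖t‖
  have hFbound : ∀ s : ℂ, ‖s‖ ≤ ‖t‖ →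
      ‖(∑' n : ℕ, qPoch q α n * s ^ n / qPoch q q n) - 1‖ ≤ K * ‖s‖ := by
    intro s hs
    have hs1 : ‖s‖ < 1 := lt_of_le_of_lt hs ht
    have hsum := summable_qbinom hq α hs1
    have h1 : (∑' n : ℕ, qPoch q α n * s ^ n / qPoch q q n) - 1 =
        ∑' n : ℕ, qPoch q α (n+1) * s ^ (n+1) / qPoch q q (n+1) := by
      rw [Summable.tsum_eq_zero_add hsum]
      norm_num [qPoch_zero]
    rw [h1]
    have hsum1 := (summable_nat_add_iff 1).2 hsum
    have hbnd : ∀ n : ℕ, ‖qPoch q α (n+1) * s ^ (n+1) / qPoch q q (n+1)‖ ≤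
        (E / ε * ‖s‖) * ‖t‖ ^ n := by
      intro n
      rw [norm_div, norm_mul, norm_pow]
      rw [div_le_iff₀ (lt_of_lt_of_le hε (hεle (n+1)))]
      have h4 : ‖s‖ ^ (n+1) ≤ ‖s‖ * ‖t‖ ^ n := by
        rw [pow_succ']
        apply mul_le_mul_of_nonneg_left _ (norm_nonneg s)
        exact pow_le_pow_left₀ (norm_nonneg s) hs n
      calc ‖qPoch q α (n+1)‖ * ‖s‖ ^ (n+1) ≤ E * (‖s‖ * ‖t‖ ^ n) := by
            apply mul_le_mul (qPoch_norm_le hq α (n+1)) h4 (by positivity) hEpos.le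
      _ = E / ε * ‖s‖ * ‖t‖ ^ n * ε := by field_simp <;> ring
      _ ≤ E / ε * ‖s‖ * ‖t‖ ^ n * ‖qPoch q q (n+1)‖ := by
            apply mul_le_mul_of_nonneg_left (hεle (n+1))
            positivity
    calc ‖∑' n : ℕ, qPoch q α (n+1) * s ^ (n+1) / qPoch q q (n+1)‖
        ≤ ∑' n : ℕ, (E / ε * ‖s‖) * ‖t‖ ^ n := by
          apply tsum_of_norm_bounded _ hbnd
          exact ((summable_geometric_of_lt_one (norm_nonneg t) ht).mul_left _).hasSum
    _ = (E / ε * ‖s‖) * (1 - ‖t‖)⁻¹ := by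
          rw [tsum_mul_left, tsum_geometric_of_lt_one (norm_nonneg t) ht]
    _ = K * ‖s‖ := by rw [hK]; field_simp <;> ring
  -- limits
  have hαt : ∀ j : ℕ, (1:ℂ) - (α * t) * q ^ j ≠ 0 := fun j => hα j
  have ht0 : ∀ j : ℕ, (1:ℂ) - t * q ^ j ≠ 0 := by
    intro j
    apply one_sub_ne_zero_of_norm_lt_one
    rw [norm_mul, norm_pow]
    calc ‖t‖ * ‖q‖ ^ j ≤ ‖t‖ * 1 :=
          mul_le_mul_of_nonneg_left (pow_le_one₀ (norm_nonneg q) hq.le) (norm_nonneg t)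
    _ < 1 := by rw [mul_one]; exact ht
  have hlim1 : Filter.Tendsto (fun m => qPoch q (α*t) m) Filter.atTop (nhds (qPochInf q (α*t))) :=
    tendsto_qPoch hq hαt
  have hlim2 : Filter.Tendsto (fun m => qPoch q t m) Filter.atTop (nhds (qPochInf q t)) :=
    tendsto_qPoch hq ht0
  have hlim3 : Filter.Tendsto
      (fun m : ℕ => ∑' n : ℕ, qPoch q α n * (q ^ m * t) ^ n / qPoch q q n)
      Filter.atTop (nhds 1) := by
    have h0 : Filter.Tendsto
        (fun m : ℕ => (∑' n : ℕ, qPoch q α n * (q ^ m * t) ^ n / qPoch q q n) - 1)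
        Filter.atTop (nhds 0) := by
      refine squeeze_zero_norm (a := fun m : ℕ => K * ‖t‖ * ‖q‖ ^ m) ?_ ?_
      · intro m
        have h5 : ‖q ^ m * t‖ ≤ ‖t‖ := by
          rw [norm_mul, norm_pow]
          calc ‖q‖ ^ m * ‖t‖ ≤ 1 * ‖t‖ :=
                mul_le_mul_of_nonneg_right (pow_le_one₀ (norm_nonneg q) hq.le) (norm_nonneg t)
          _ = ‖t‖ := one_mul _
        calc ‖(∑' n : ℕ, qPoch q α n * (q ^ m * t) ^ n / qPoch q q n) - 1‖
            ≤ K * ‖q ^ m * t‖ := hFbound _ h5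
        _ = K * ‖t‖ * ‖q‖ ^ m := by rw [norm_mul, norm_pow]; ring
      · have h6 := tendsto_pow_atTop_nhds_zero_of_lt_one (norm_nonneg q) hq
        simpa using h6.const_mul (K * ‖t‖)
    have := h0.add_const 1
    simpa using this
  -- combine
  have heq : ∀ m : ℕ, qPoch q t m * ∑' n : ℕ, qPoch q α n * t ^ n / qPoch q q n =
      qPoch q (α * t) m * ∑' n : ℕ, qPoch q α n * (q ^ m * t) ^ n / qPoch q q n :=
    fun m => qbinom_iter hq α ht m
  have hlimL : Filter.Tendsto
      (fun m : ℕ => qPoch q t m * ∑' n : ℕ, qPoch q α n * t ^ n / qPoch q q n)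
      Filter.atTop (nhds (qPochInf q t * ∑' n : ℕ, qPoch q α n * t ^ n / qPoch q q n)) :=
    hlim2.mul_const _
  have hlimR : Filter.Tendsto
      (fun m : ℕ => qPoch q (α * t) m * ∑' n : ℕ, qPoch q α n * (q ^ m * t) ^ n / qPoch q q n)
      Filter.atTop (nhds (qPochInf q (α * t) * 1)) :=
    hlim1.mul hlim3
  have hfinal : qPochInf q t * ∑' n : ℕ, qPoch q α n * t ^ n / qPoch q q n =
      qPochInf q (α * t) * 1 := by
    apply tendsto_nhds_unique _ hlimR
    exact (Filter.tendsto_congr heq).1 hlimL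
  have hne : qPochInf q t ≠ 0 := qPochInf_ne_zero hq ht0
  field_simp at hfinal ⊢
  linear_combination hfinal

noncomputable def Bq (q : ℂ) (m k : ℕ) : ℂ :=
  if k ≤ m then qPoch q q m / (qPoch q q k * qPoch q q (m-k)) else 0

lemma Bq_zero {q : ℂ} (hq : ‖q‖ < 1) (m : ℕ) : Bq q m 0 = 1 := by
  simp [Bq, qPoch_zero, div_self (qPoch_q_ne_zero hq m)]

lemma Bq_self {q : ℂ} (hq : ‖q‖ < 1) (m : ℕ) : Bq q m m = 1 := by
  simp [Bq, qPoch_zero, div_self (qPoch_q_ne_zero hq m)]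

lemma Bq_of_le {q : ℂ} {m k : ℕ} (h : k ≤ m) :
    Bq q m k = qPoch q q m / (qPoch q q k * qPoch q q (m-k)) := by
  simp [Bq, h]

lemma Bq_of_gt {q : ℂ} {m k : ℕ} (h : m < k) : Bq q m k = 0 := by
  simp [Bq, Nat.not_le.2 h]

lemma Bq_pascal {q : ℂ} (hq : ‖q‖ < 1) (m j : ℕ) :
    Bq q (m+1) (j+1) = Bq q m j + q^(j+1) * Bq q m (j+1) := by
  rcases lt_trichotomy (j+1) (m+1) with h | h | h
  · -- j + 1 ≤ m
    have hj1m : j + 1 ≤ m := by omega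
    obtain ⟨i, rfl⟩ : ∃ i, m = j + 1 + i := ⟨m - (j+1), by omega⟩
    rw [Bq_of_le (by omega), Bq_of_le (by omega), Bq_of_le (by omega)]
    have e1 : j + 1 + i + 1 - (j + 1) = i + 1 := by omega
    have e2 : j + 1 + i - j = i + 1 := by omega
    have e3 : j + 1 + i - (j + 1) = i := by omega
    rw [e1, e2, e3]
    have h1 : qPoch q q (j + 1 + i + 1) = qPoch q q (j + 1 + i) * (1 - q * q ^ (j + 1 + i)) :=
      qPoch_succ q q _
    have h2 : qPoch q q (j + 1) = qPoch q q j * (1 - q * q ^ j) := qPoch_succ q q _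
    have h3 : qPoch q q (i + 1) = qPoch q q i * (1 - q * q ^ i) := qPoch_succ q q _
    have n1 := qPoch_q_ne_zero hq (j + 1 + i)
    have n2 := qPoch_q_ne_zero hq j
    have n3 := qPoch_q_ne_zero hq i
    have n4 : (1:ℂ) - q * q ^ j ≠ 0 := by
      apply one_sub_ne_zero_of_norm_lt_one
      calc ‖q * q ^ j‖ = ‖q ^ (j+1)‖ := by rw [← pow_succ']
      _ < 1 := norm_q_pow_lt_one hq _ (by omega)
    have n5 : (1:ℂ) - q * q ^ i ≠ 0 := by
      apply one_sub_ne_zero_of_norm_lt_one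
      calc ‖q * q ^ i‖ = ‖q ^ (i+1)‖ := by rw [← pow_succ']
      _ < 1 := norm_q_pow_lt_one hq _ (by omega)
    rw [h1, h2, h3]
    field_simp
    ring
  · -- j = m
    have hj : j = m := by omega
    subst hj
    rw [Bq_self hq, Bq_self hq, Bq_of_gt (by omega)]
    ring
  · -- j + 1 > m + 1
    rw [Bq_of_gt (by omega), Bq_of_gt (by omega), Bq_of_gt (by omega)]
    ring

lemma cauchyP_succ (q x y : ℂ) (k : ℕ) :
    cauchyP q x y (k+1) = cauchyP q x y k * (x - q^k * y) := Finset.prod_range_succ _ _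

lemma cauchyP_mulq (q x y : ℂ) (k : ℕ) :
    cauchyP q (x*q) (y*q) k = q^k * cauchyP q x y k := by
  rw [cauchyP, cauchyP]
  have h : ∀ j ∈ Finset.range k, (x*q - q^j*(y*q)) = q * (x - q^j*y) := by
    intro j _; ring
  rw [Finset.prod_congr rfl h, Finset.prod_mul_distrib, Finset.prod_const, Finset.card_range]

lemma choose_two_succ (k : ℕ) : (k+1).choose 2 = k.choose 2 + k := by
  rw [show (2:ℕ) = 1 + 1 from rfl, Nat.choose_succ_succ]
  simp [Nat.choose_one_right]
  omega

lemma chu {q : ℂ} (hq : ‖q‖ < 1) : ∀ (m : ℕ) (a c : ℂ),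
    qPoch q a m = ∑ k ∈ Finset.range (m+1),
      (-1)^k * q^(k.choose 2) * Bq q m k * cauchyP q a c k * qPoch q (c * q^k) (m-k) := by
  intro m
  induction m with
  | zero =>
    intro a c
    simp [qPoch_zero, Bq_zero hq, cauchyP]
  | succ m ih =>
    intro a c
    -- abbreviations
    set f : ℕ → ℂ := fun k => (-1)^k * q^(k.choose 2) * Bq q (m+1) k * cauchyP q a c k *
      qPoch q (c * q^k) (m+1-k) with hf
    set X : ℕ → ℂ := fun k => -((-1)^k * q^((k+1).choose 2) * Bq q m k * cauchyP q a c (k+1) *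
      qPoch q (c * q^(k+1)) (m-k)) with hX
    set W : ℕ → ℂ := fun k => (-1)^k * q^(k.choose 2) * q^k * Bq q m k * cauchyP q a c k *
      qPoch q (c * q^k) (m+1-k) with hW
    have hsplit : ∀ k ∈ Finset.range (m+1), f (k+1) = X k +
        ((-1)^(k+1) * q^((k+1).choose 2) * (q^(k+1) * Bq q m (k+1)) * cauchyP q a c (k+1) *
          qPoch q (c * q^(k+1)) (m-k)) := by
      intro k hk
      rw [hf]
      simp only []
      rw [Bq_pascal hq m k]
      have e1 : m + 1 - (k+1) = m - k := by omega
      rw [e1, hX]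
      simp only []
      ring
    -- main calc
    have step1 : ∑ k ∈ Finset.range (m+2), f k = (∑ k ∈ Finset.range (m+1), f (k+1)) + f 0 :=
      Finset.sum_range_succ' f (m+1)
    have step2 : (∑ k ∈ Finset.range (m+1), f (k+1)) =
        (∑ k ∈ Finset.range (m+1), X k) +
        ∑ k ∈ Finset.range (m+1), ((-1)^(k+1) * q^((k+1).choose 2) * (q^(k+1) * Bq q m (k+1)) *
          cauchyP q a c (k+1) * qPoch q (c * q^(k+1)) (m-k)) := by
      rw [← Finset.sum_add_distrib]
      exact Finset.sum_congr rfl hsplit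
    -- the Y-sum: last term vanishes
    set Y : ℕ → ℂ := fun k => (-1)^(k+1) * q^((k+1).choose 2) * (q^(k+1) * Bq q m (k+1)) *
      cauchyP q a c (k+1) * qPoch q (c * q^(k+1)) (m-k) with hY
    have hYm : Y m = 0 := by
      rw [hY]
      simp only []
      rw [Bq_of_gt (by omega)]
      ring
    have step3 : (∑ k ∈ Finset.range (m+1), Y k) + f 0 = ∑ k ∈ Finset.range (m+1), W k := by
      rw [Finset.sum_range_succ, hYm, add_zero]
      rw [Finset.sum_range_succ' W m]
      congr 1
      · apply Finset.sum_congr rfl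
        intro k hk
        rw [hY, hW]
        simp only []
        have e1 : m + 1 - (k+1) = m - k := by omega
        rw [e1]
        ring
      · rw [hW, hf]
        simp only []
        rw [Bq_zero hq, Bq_zero hq]
        norm_num
    have step4 : ∀ k ∈ Finset.range (m+1), W k + X k = (1 - a) *
        ((-1)^k * q^(k.choose 2) * Bq q m k * cauchyP q (a*q) (c*q) k *
          qPoch q ((c*q) * q^k) (m-k)) := by
      intro k hk
      have hkm : k ≤ m := by have := Finset.mem_range.1 hk; omega
      rw [hW, hX]
      simp only []
      have e1 : m + 1 - k = (m - k) + 1 := by omega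
      rw [e1, qPoch_succ' q (c * q^k) (m-k)]
      rw [cauchyP_succ q a c k, cauchyP_mulq q a c k]
      rw [choose_two_succ k, pow_add]
      have e2 : c * q ^ k * q = c * q ^ (k+1) := by ring
      have e3 : c * q * q ^ k = c * q ^ (k+1) := by ring
      rw [e2, e3]
      ring
    calc qPoch q a (m+1) = (1 - a) * qPoch q (a*q) m := qPoch_succ' q a m
    _ = (1 - a) * ∑ k ∈ Finset.range (m+1),
          (-1)^k * q^(k.choose 2) * Bq q m k * cauchyP q (a*q) (c*q) k *
          qPoch q ((c*q) * q^k) (m-k) := by rw [← ih (a*q) (c*q)]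
    _ = ∑ k ∈ Finset.range (m+1), (W k + X k) := by
        rw [Finset.mul_sum]
        exact (Finset.sum_congr rfl step4).symm
    _ = (∑ k ∈ Finset.range (m+1), X k) + ((∑ k ∈ Finset.range (m+1), Y k) + f 0) := by
        rw [step3, ← Finset.sum_add_distrib]
        apply Finset.sum_congr rfl
        intro k _
        ring
    _ = ∑ k ∈ Finset.range (m+2), f k := by
        rw [step1, step2]
        ring

lemma cauchyP_eq_qPoch {q a : ℂ} (ha : a ≠ 0) (c : ℂ) (k : ℕ) :
    cauchyP q a c k = a^k * qPoch q (c/a) k := by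
  rw [cauchyP, qPoch]
  have h : ∀ j ∈ Finset.range k, (a - q^j * c) = a * (1 - c/a * q^j) := by
    intro j _
    field_simp
  rw [Finset.prod_congr rfl h, Finset.prod_mul_distrib, Finset.prod_const, Finset.card_range]

lemma factor_ne_zero_of_qPoch {q x : ℂ} (h : ∀ n : ℕ, qPoch q x n ≠ 0) (j : ℕ) :
    (1:ℂ) - x * q ^ j ≠ 0 := by
  have h1 := h (j+1)
  rw [qPoch] at h1
  intro hc
  apply h1
  apply Finset.prod_eq_zero (Finset.self_mem_range_succ j) hc

lemma summable_aux {r M : ℝ} (hr : 0 ≤ r) (hr1 : r < 1) (hM : 0 ≤ M) (C : ℝ) :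
    Summable (fun k : ℕ => C * (r^(k.choose 2) * M^k)) := by
  apply Summable.mul_left
  apply summable_of_ratio_norm_eventually_le (r := 1/2) (by norm_num)
  have ht : Filter.Tendsto (fun k : ℕ => r^k * M) Filter.atTop (nhds 0) := by
    have := tendsto_pow_atTop_nhds_zero_of_lt_one hr hr1
    simpa using this.mul_const M
  filter_upwards [ht.eventually_le_const (show (0:ℝ) < 1/2 by norm_num)] with k hk
  have h1 : r^((k+1).choose 2) * M^(k+1) = (r^(k.choose 2) * M^k) * (r^k * M) := by
    rw [choose_two_succ k, pow_add, pow_succ]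
    ring
  rw [Real.norm_eq_abs, Real.norm_eq_abs, abs_of_nonneg (by positivity),
    abs_of_nonneg (by positivity), h1]
  have h2 : (0:ℝ) ≤ r^(k.choose 2) * M^k := by positivity
  calc r^(k.choose 2) * M^k * (r^k * M) ≤ r^(k.choose 2) * M^k * (1/2) :=
        mul_le_mul_of_nonneg_left hk h2
  _ = 1/2 * (r^(k.choose 2) * M^k) := by ring

def diagEquiv : (Σ m : ℕ, Fin (m+1)) ≃ ℕ × ℕ where
  toFun s := (s.2.val, s.1 - s.2.val)
  invFun p := ⟨p.1 + p.2, ⟨p.1, by omega⟩⟩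
  left_inv := by
    rintro ⟨m, ⟨k, hk⟩⟩
    dsimp only
    have h : k + (m - k) = m := by omega
    exact Sigma.ext h ((Fin.heq_ext_iff (congrArg (· + 1) h)).2 rfl)
  right_inv := by
    rintro ⟨k, n⟩
    simp

noncomputable def qBinomR (q : ℂ) (α : ℝ) (k : ℕ) : ℂ :=
  qPoch q (q ^ (-α : ℂ)) k / qPoch q q k * (-1) ^ k *
    q ^ (((α * k - k * (k - 1) / 2 : ℝ)) : ℂ)

noncomputable def ciglerC (q : ℂ) (α : ℝ) (x y b : ℂ) (n : ℕ) : ℂ :=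
  ∑ k ∈ Finset.range (n + 1),
    (-1) ^ k * q ^ (k.choose 2) * qBinomR q α k * b ^ k *
      (qPoch q q n / qPoch q q (n - k)) * cauchyP q x y (n - k)

noncomputable def ciglerD (q : ℂ) (α : ℝ) (x y b : ℂ) (n : ℕ) : ℂ :=
  ∑ k ∈ Finset.range (n + 1),
    q ^ (k.choose 2) * qBinomR q α k * b ^ k *
      (qPoch q q n / qPoch q q (n - k)) *
      ((-1) ^ (n + k) * q ^ (-(n.choose 2 : ℤ)) * cauchyP q y x (n - k))

noncomputable def ascPhi (q α x : ℂ) (n : ℕ) : ℂ :=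
  ∑ k ∈ Finset.range (n + 1),
    (qPoch q q n / (qPoch q q k * qPoch q q (n - k))) * qPoch q α k * x ^ k

noncomputable def ascPsi (q α x : ℂ) (n : ℕ) : ℂ :=
  ∑ k ∈ Finset.range (n + 1),
    (qPoch q q n / (qPoch q q k * qPoch q q (n - k))) *
      q ^ ((k : ℤ) * ((k : ℤ) - (n : ℤ))) * qPoch q (α * q ^ (1 - (k : ℤ))) k * x ^ k

set_option maxHeartbeats 1000000 in
theorem stmt_16 (q a b c z : ℂ) (hq : ‖q‖ < 1) (ha : a ≠ 0) (hz : ‖z‖ < 1)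
    (hcn : ∀ n : ℕ, qPoch q c n ≠ 0) (hbz : ∀ k : ℕ, qPoch q (b * z) k ≠ 0) :
    ∑' n : ℕ, qPoch q a n * qPoch q b n * z ^ n / (qPoch q c n * qPoch q q n) =
      (qPochInf q (b * z) / qPochInf q z) *
        ∑' k : ℕ,
          (-1) ^ k * q ^ (k.choose 2) * qPoch q b k * qPoch q (c / a) k * (a * z) ^ k /
            (qPoch q (b * z) k * qPoch q c k * qPoch q q k) := by
  have hqq := qPoch_q_ne_zero hq
  have hbzf : ∀ j : ℕ, (1:ℂ) - b * z * q ^ j ≠ 0 := factor_ne_zero_of_qPoch hbz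
  obtain ⟨εq, hεq, hεqle⟩ := qPoch_norm_lower hq hqq
  obtain ⟨εc, hεc, hεcle⟩ := qPoch_norm_lower hq hcn
  set Eb : ℝ := Real.exp (‖b‖ * (1 - ‖q‖)⁻¹) with hEb
  set Eca : ℝ := Real.exp (‖c/a‖ * (1 - ‖q‖)⁻¹) with hEca
  have hEbpos : 0 < Eb := Real.exp_pos _
  have hEcapos : 0 < Eca := Real.exp_pos _
  set g : ℕ × ℕ → ℂ := fun p => (-1)^p.1 * q^(p.1.choose 2) * qPoch q b (p.2 + p.1) *
      qPoch q (c/a) p.1 * a^p.1 * z^(p.2 + p.1)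
      / (qPoch q c p.1 * qPoch q q p.1 * qPoch q q p.2) with hg
  -- summability of g
  have hsb : Summable (fun p : ℕ × ℕ =>
      (Eb*Eca/(εc*εq*εq) * (‖q‖^(p.1.choose 2) * (‖a‖*‖z‖)^p.1)) * ‖z‖^p.2) :=
    Summable.mul_of_nonneg
      (summable_aux (norm_nonneg q) hq
        (mul_nonneg (norm_nonneg a) (norm_nonneg z)) (Eb*Eca/(εc*εq*εq)))
      (summable_geometric_of_lt_one (norm_nonneg z) hz)
      (fun k => mul_nonneg (div_nonneg (mul_nonneg hEbpos.le hEcapos.le)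
        (mul_nonneg (mul_nonneg hεc.le hεq.le) hεq.le)) (by positivity))
      (fun n => by positivity)
  have hbnd : ∀ p : ℕ × ℕ, ‖g p‖ ≤
      (Eb*Eca/(εc*εq*εq) * (‖q‖^(p.1.choose 2) * (‖a‖*‖z‖)^p.1)) * ‖z‖^p.2 := by
    rintro ⟨k, n⟩
    rw [hg]
    simp only [norm_div, norm_mul, norm_pow, norm_neg, norm_one, one_pow, one_mul]
    calc ‖q‖^(k.choose 2) * ‖qPoch q b (n+k)‖ * ‖qPoch q (c/a) k‖ * ‖a‖^k * ‖z‖^(n+k)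
          / (‖qPoch q c k‖ * ‖qPoch q q k‖ * ‖qPoch q q n‖)
        ≤ ‖q‖^(k.choose 2) * Eb * Eca * ‖a‖^k * ‖z‖^(n+k) / (εc * εq * εq) := by
          gcongr
          · exact le_of_le_of_eq (qPoch_norm_le hq b (n+k)) hEb.symm
          · exact le_of_le_of_eq (qPoch_norm_le hq (c/a) k) hEca.symm
          · exact hεcle k
          · exact hεqle k
          · exact hεqle n
    _ = Eb*Eca/(εc*εq*εq) * (‖q‖^(k.choose 2) * (‖a‖*‖z‖)^k) * ‖z‖^n := by
          rw [pow_add, mul_pow]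
          field_simp
  have hgs : Summable g :=
    Summable.of_norm (Summable.of_nonneg_of_le (fun p => norm_nonneg _) hbnd hsb)
  -- step A: each k-term expands into a series over n
  have hA : ∀ k : ℕ, (qPochInf q (b*z) / qPochInf q z) *
      ((-1)^k * q^(k.choose 2) * qPoch q b k * qPoch q (c/a) k * (a*z)^k /
        (qPoch q (b*z) k * qPoch q c k * qPoch q q k)) = ∑' n : ℕ, g (k, n) := by
    intro k
    have hα : ∀ j : ℕ, (1:ℂ) - b * q^k * z * q^j ≠ 0 := by
      intro j
      have h := hbzf (k+j)
      rw [show b*z*q^(k+j) = b*q^k*z*q^j by rw [pow_add]; ring] at h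
      exact h
    have hb2 : ∑' n : ℕ, qPoch q (b*q^k) n * z^n / qPoch q q n
        = qPochInf q (b*z*q^k) / qPochInf q z := by
      have h := qbinom hq (b*q^k) hz hα
      rw [show b*q^k*z = b*z*q^k by ring] at h
      exact h
    rw [qPochInf_split hq hbzf k]
    rw [show qPoch q (b*z) k * qPochInf q (b*z*q^k) / qPochInf q z *
        ((-1)^k * q^(k.choose 2) * qPoch q b k * qPoch q (c/a) k * (a*z)^k /
          (qPoch q (b*z) k * qPoch q c k * qPoch q q k))
      = (qPoch q (b*z) k * ((-1)^k * q^(k.choose 2) * qPoch q b k * qPoch q (c/a) k * (a*z)^k /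
          (qPoch q (b*z) k * qPoch q c k * qPoch q q k))) * (qPochInf q (b*z*q^k) / qPochInf q z)
      from by ring]
    rw [← hb2, ← tsum_mul_left]
    apply tsum_congr
    intro n
    rw [hg]
    simp only []
    have hadd : qPoch q b (n + k) = qPoch q b k * qPoch q (b*q^k) n := by
      rw [add_comm n k, qPoch_add]
    rw [hadd]
    field_simp [hbz k, hcn k, hqq k, hqq n]
    ring
  -- step D: diagonal sums give the left-hand series
  have hD : ∀ m : ℕ, ∑ k ∈ Finset.range (m+1), g (k, m-k)
      = qPoch q a m * qPoch q b m * z^m / (qPoch q c m * qPoch q q m) := by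
    intro m
    have hchu := chu hq m a c
    have hterm : ∀ k ∈ Finset.range (m+1), g (k, m-k) =
        (qPoch q b m * z^m / (qPoch q c m * qPoch q q m)) *
        ((-1)^k * q^(k.choose 2) * Bq q m k * cauchyP q a c k * qPoch q (c*q^k) (m-k)) := by
      intro k hk
      have hkm : k ≤ m := by have := Finset.mem_range.1 hk; omega
      have e1 : m - k + k = m := by omega
      rw [hg]
      simp only []
      rw [e1, Bq_of_le hkm, cauchyP_eq_qPoch ha]
      have e2 : qPoch q c m = qPoch q c k * qPoch q (c*q^k) (m-k) := by
        rw [← qPoch_add]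
        congr 1
        omega
      have hcq : qPoch q (c*q^k) (m-k) ≠ 0 := by
        intro h0
        apply hcn m
        rw [e2, h0, mul_zero]
      rw [e2]
      field_simp [hcn k, hqq k, hqq m, hqq (m-k)]
    rw [Finset.sum_congr rfl hterm, ← Finset.mul_sum, ← hchu]
    ring
  -- assemble
  symm
  calc (qPochInf q (b*z) / qPochInf q z) *
      ∑' k : ℕ, (-1)^k * q^(k.choose 2) * qPoch q b k * qPoch q (c/a) k * (a*z)^k /
        (qPoch q (b*z) k * qPoch q c k * qPoch q q k)
      = ∑' k : ℕ, (qPochInf q (b*z) / qPochInf q z) *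
        ((-1)^k * q^(k.choose 2) * qPoch q b k * qPoch q (c/a) k * (a*z)^k /
          (qPoch q (b*z) k * qPoch q c k * qPoch q q k)) := tsum_mul_left.symm
  _ = ∑' k : ℕ, ∑' n : ℕ, g (k, n) := tsum_congr hA
  _ = ∑' p : ℕ × ℕ, g p := (Summable.tsum_prod hgs).symm
  _ = ∑' s : Σ m : ℕ, Fin (m+1), g (diagEquiv s) := (diagEquiv.tsum_eq g).symm
  _ = ∑' m : ℕ, ∑' k : Fin (m+1), g (diagEquiv ⟨m, k⟩) :=
        Summable.tsum_sigma (diagEquiv.summable_iff.2 hgs)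
  _ = ∑' m : ℕ, ∑ k ∈ Finset.range (m+1), g (k, m - k) := by
        apply tsum_congr
        intro m
        rw [tsum_fintype]
        exact Fin.sum_univ_eq_sum_range (fun j => g (j, m - j)) (m+1)
  _ = ∑' m : ℕ, qPoch q a m * qPoch q b m * z^m / (qPoch q c m * qPoch q q m) :=
        tsum_congr hD
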